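/- Let X be a nonempty perfect compact zero-dimensional space and let G ≤ Homeo(X) act minimally with A(G;X) ≤ G (the action is alternatable). Then for every nonempty clopen Y ⊆ X, the rigid stabiliser rist_G(Y) is non-trivial and acts minimally on Y; moreover every non-trivial normal subgroup of rist_G(Y) acts minimally on Y. -/
import Mathlib


open Topology

variable {X : Type*} [TopologicalSpace X]

/-- The group of self-homeomorphisms of `X` under composition. -/
instance : Group (X ≃ₜ X) where
  mul f g := g.trans f
  one := Homeomorph.refl X
  inv := Homeomorph.symm
  mul_assoc _ _ _ := Homeomorph.ext fun _ => rfl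
  one_mul _ := Homeomorph.ext fun _ => rfl
  mul_one _ := Homeomorph.ext fun _ => rfl
  inv_mul_cancel a := Homeomorph.ext fun x => a.symm_apply_apply x

/-- The rigid stabiliser of `Y` in `G`, as a subgroup of `Homeo(X)`: the elements of `G`
fixing the complement of `Y` pointwise. -/
def ristSub (G : Subgroup (X ≃ₜ X)) (Y : Set X) : Subgroup (X ≃ₜ X) where
  carrier := {g | g ∈ G ∧ ∀ x ∉ Y, g x = x}
  one_mem' := ⟨G.one_mem, fun _ _ => rfl⟩
  mul_mem' := fun {a b} ha hb => ⟨G.mul_mem ha.1 hb.1, fun x hx => by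
    show a (b x) = x
    rw [hb.2 x hx, ha.2 x hx]⟩
  inv_mem' := fun {a} ha => ⟨G.inv_mem ha.1, fun x hx => by
    show a.symm x = x
    conv_lhs => rw [← ha.2 x hx]
    exact a.symm_apply_apply x⟩

/-- `h` is a `3`-cycle of a multisection of degree 3 of `G`. -/
def IsAltGen (G : Subgroup (X ≃ₜ X)) (h : X ≃ₜ X) : Prop :=
  ∃ (e₁ e₂ e₃ : Set X) (a b : X ≃ₜ X), a ∈ G ∧ b ∈ G ∧
    IsClopen e₁ ∧ IsClopen e₂ ∧ IsClopen e₃ ∧ e₁.Nonempty ∧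
    Disjoint e₁ e₂ ∧ Disjoint e₂ e₃ ∧ Disjoint e₁ e₃ ∧
    (⇑a) '' e₁ = e₂ ∧ (⇑b) '' e₂ = e₃ ∧
    (∀ x ∈ e₁, h x = a x) ∧ (∀ x ∈ e₂, h x = b x) ∧
    (∀ x ∈ e₃, h x = a.symm (b.symm x)) ∧ (∀ x ∉ e₁ ∪ e₂ ∪ e₃, h x = x)

/-! ### Auxiliary lemmas -/

section Aux

lemma homeo_mul_apply (a b : X ≃ₜ X) (x : X) : (a * b) x = a (b x) := rfl

lemma homeo_one_apply (x : X) : (1 : X ≃ₜ X) x = x := rfl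

lemma homeo_inv_eq_symm (a : X ≃ₜ X) : a⁻¹ = a.symm := rfl

lemma mem_ristSub {G : Subgroup (X ≃ₜ X)} {Y : Set X} {g : X ≃ₜ X} :
    g ∈ ristSub G Y ↔ g ∈ G ∧ ∀ x ∉ Y, g x = x := Iff.rfl

/-- In a set open around its points, a perfect space provides a point different from any
given one. -/
lemma exists_ne_mem_of_open (hperf : ∀ x : X, (𝓝[≠] x).NeBot) {O : Set X} (hO : IsOpen O)
    (hne : O.Nonempty) (x : X) : ∃ z ∈ O, z ≠ x := by
  obtain ⟨w, hw⟩ := hne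
  by_cases hwx : w = x
  · subst hwx
    have h1 : O ∈ 𝓝[≠] w := mem_nhdsWithin_of_mem_nhds (hO.mem_nhds hw)
    have h2 : ({w}ᶜ : Set X) ∈ 𝓝[≠] w := self_mem_nhdsWithin
    obtain ⟨z, hz1, hz2⟩ := (hperf w).nonempty_of_mem (Filter.inter_mem h1 h2)
    exact ⟨z, hz1, hz2⟩
  · exact ⟨w, hw, hwx⟩

lemma isClopen_image_homeo (a : X ≃ₜ X) {s : Set X} (hs : IsClopen s) :
    IsClopen ((⇑a) '' s) := by
  rw [← Homeomorph.preimage_symm]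
  exact hs.preimage a.symm.continuous

/-- Gluing a 3-cycle homeomorphism out of three disjoint clopen pieces. -/
lemma exists_cycle [CompactSpace X] [T2Space X] {e₁ e₂ e₃ : Set X} {a b : X ≃ₜ X}
    (h1 : IsClopen e₁) (h2 : IsClopen e₂) (h3 : IsClopen e₃)
    (d12 : Disjoint e₁ e₂) (d23 : Disjoint e₂ e₃) (d13 : Disjoint e₁ e₃)
    (hae : (⇑a) '' e₁ = e₂) (hbe : (⇑b) '' e₂ = e₃) :
    ∃ h : X ≃ₜ X, (∀ x ∈ e₁, h x = a x) ∧ (∀ x ∈ e₂, h x = b x) ∧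
      (∀ x ∈ e₃, h x = a.symm (b.symm x)) ∧ (∀ x ∉ e₁ ∪ e₂ ∪ e₃, h x = x) := by
  classical
  have ha1 : ∀ x ∈ e₁, a x ∈ e₂ := fun x hx => hae ▸ Set.mem_image_of_mem _ hx
  have hb2 : ∀ x ∈ e₂, b x ∈ e₃ := fun x hx => hbe ▸ Set.mem_image_of_mem _ hx
  have hbs3 : ∀ x ∈ e₃, b.symm x ∈ e₂ := by
    intro x hx
    rw [← hbe] at hx
    obtain ⟨z, hz, rfl⟩ := hx
    simpa using hz
  have has2 : ∀ x ∈ e₂, a.symm x ∈ e₁ := by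
    intro x hx
    rw [← hae] at hx
    obtain ⟨z, hz, rfl⟩ := hx
    simpa using hz
  set f : X → X := fun x => if x ∈ e₁ then a x else if x ∈ e₂ then b x
      else if x ∈ e₃ then a.symm (b.symm x) else x with hfdef
  set g : X → X := fun x => if x ∈ e₂ then a.symm x else if x ∈ e₃ then b.symm x
      else if x ∈ e₁ then b (a x) else x with hgdef
  have left : ∀ x, g (f x) = x := by
    intro x
    by_cases hx1 : x ∈ e₁
    · have h2' : a x ∈ e₂ := ha1 x hx1
      simp only [hfdef, hgdef, if_pos hx1, if_pos h2', Homeomorph.symm_apply_apply]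
    · by_cases hx2 : x ∈ e₂
      · have h3' : b x ∈ e₃ := hb2 x hx2
        have n2 : b x ∉ e₂ := Set.disjoint_right.mp d23 h3'
        simp only [hfdef, hgdef, if_neg hx1, if_pos hx2, if_neg n2, if_pos h3',
          Homeomorph.symm_apply_apply]
      · by_cases hx3 : x ∈ e₃
        · have hb' : b.symm x ∈ e₂ := hbs3 x hx3
          have ha' : a.symm (b.symm x) ∈ e₁ := has2 _ hb'
          have n2 : a.symm (b.symm x) ∉ e₂ := Set.disjoint_left.mp d12 ha'
          have n3 : a.symm (b.symm x) ∉ e₃ := Set.disjoint_left.mp d13 ha'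
          simp only [hfdef, hgdef, if_neg hx1, if_neg hx2, if_pos hx3, if_neg n2, if_neg n3,
            if_pos ha', Homeomorph.apply_symm_apply]
        · simp only [hfdef, hgdef, if_neg hx1, if_neg hx2, if_neg hx3]
  have right : ∀ x, f (g x) = x := by
    intro x
    by_cases hx2 : x ∈ e₂
    · have h1' : a.symm x ∈ e₁ := has2 x hx2
      simp only [hfdef, hgdef, if_pos hx2, if_pos h1', Homeomorph.apply_symm_apply]
    · by_cases hx3 : x ∈ e₃
      · have h2' : b.symm x ∈ e₂ := hbs3 x hx3
        have n1 : b.symm x ∉ e₁ := Set.disjoint_right.mp d12 h2'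
        simp only [hfdef, hgdef, if_neg hx2, if_pos hx3, if_neg n1, if_pos h2',
          Homeomorph.apply_symm_apply]
      · by_cases hx1 : x ∈ e₁
        · have h2' : a x ∈ e₂ := ha1 x hx1
          have h3' : b (a x) ∈ e₃ := hb2 _ h2'
          have n1 : b (a x) ∉ e₁ := Set.disjoint_right.mp d13 h3'
          have n2 : b (a x) ∉ e₂ := Set.disjoint_right.mp d23 h3'
          simp only [hfdef, hgdef, if_neg hx2, if_neg hx3, if_pos hx1, if_neg n1, if_neg n2,
            if_pos h3', Homeomorph.symm_apply_apply]
        · simp only [hfdef, hgdef, if_neg hx1, if_neg hx2, if_neg hx3]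
  have hcf : Continuous f := by
    rw [hfdef]
    refine Continuous.if ?_ a.continuous
      (Continuous.if ?_ b.continuous
        (Continuous.if ?_ (a.symm.continuous.comp b.symm.continuous) continuous_id)) <;>
      simp [h1.frontier_eq, h2.frontier_eq, h3.frontier_eq]
  let E : X ≃ X := ⟨f, g, left, right⟩
  refine ⟨Continuous.homeoOfEquivCompactToT2 (f := E) hcf, ?_, ?_, ?_, ?_⟩
  · intro x hx
    show f x = a x
    simp only [hfdef, if_pos hx]
  · intro x hx
    have hx1 : x ∉ e₁ := Set.disjoint_right.mp d12 hx
    show f x = b x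
    simp only [hfdef, if_neg hx1, if_pos hx]
  · intro x hx
    have hx1 : x ∉ e₁ := Set.disjoint_right.mp d13 hx
    have hx2 : x ∉ e₂ := Set.disjoint_right.mp d23 hx
    show f x = a.symm (b.symm x)
    simp only [hfdef, if_neg hx1, if_neg hx2, if_pos hx]
  · intro x hx
    have hx1 : x ∉ e₁ := fun h => hx (Or.inl (Or.inl h))
    have hx2 : x ∉ e₂ := fun h => hx (Or.inl (Or.inr h))
    have hx3 : x ∉ e₃ := fun h => hx (Or.inr h)
    show f x = x
    simp only [hfdef, if_neg hx1, if_neg hx2, if_neg hx3]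

/-- An alternating generator supported in `P ∪ W` moving a point of `P` into `W`. -/
lemma exists_move [CompactSpace X] [T2Space X] [TotallyDisconnectedSpace X]
    (hperf : ∀ x : X, (𝓝[≠] x).NeBot) (G : Subgroup (X ≃ₜ X))
    (hmin : ∀ x : X, Dense {y | ∃ g ∈ G, g x = y})
    {P W : Set X} (hP : IsClopen P) (hW : IsClopen W) (hWne : W.Nonempty)
    (hd : Disjoint P W) {y : X} (hy : y ∈ P) :
    ∃ h : X ≃ₜ X, IsAltGen G h ∧ h y ∈ W ∧ ∀ x ∉ P ∪ W, h x = x := by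
  obtain ⟨w₁, hw₁⟩ := hWne
  obtain ⟨w₂, hw₂W, hw₂⟩ : ∃ z ∈ W, z ≠ w₁ := exists_ne_mem_of_open hperf hW.2 ⟨w₁, hw₁⟩ w₁
  obtain ⟨W₂, hW₂cl, hw₂m, hW₂sub⟩ :=
    compact_exists_isClopen_in_isOpen (hW.2.inter isOpen_compl_singleton) ⟨hw₂W, hw₂⟩
  set W₁ : Set X := W \ W₂ with hW₁def
  have hW₁cl : IsClopen W₁ := hW.diff hW₂cl
  have hw₁m : w₁ ∈ W₁ := ⟨hw₁, fun h => (hW₂sub h).2 rfl⟩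
  -- pick a ∈ G with a y ∈ W₁
  obtain ⟨z₁, ⟨a, haG, haz⟩, hz₁⟩ := (hmin y).exists_mem_open hW₁cl.2 ⟨w₁, hw₁m⟩
  have hay : a y ∈ W₁ := haz ▸ hz₁
  -- pick b ∈ G with b (a y) ∈ W₂
  obtain ⟨z₂, ⟨b, hbG, hbz⟩, hz₂⟩ := (hmin (a y)).exists_mem_open hW₂cl.2 ⟨w₂, hw₂m⟩
  have hbay : b (a y) ∈ W₂ := hbz ▸ hz₂
  set e₁ : Set X := P ∩ (⇑a) ⁻¹' (W₁ ∩ (⇑b) ⁻¹' W₂) with he₁def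
  have he₁cl : IsClopen e₁ :=
    hP.inter ((hW₁cl.inter (hW₂cl.preimage b.continuous)).preimage a.continuous)
  have hye₁ : y ∈ e₁ := ⟨hy, hay, hbay⟩
  set e₂ : Set X := (⇑a) '' e₁ with he₂def
  set e₃ : Set X := (⇑b) '' e₂ with he₃def
  have he₂cl : IsClopen e₂ := isClopen_image_homeo a he₁cl
  have he₃cl : IsClopen e₃ := isClopen_image_homeo b he₂cl
  have he₂sub : e₂ ⊆ W₁ ∩ (⇑b) ⁻¹' W₂ := by
    rintro x ⟨z, hz, rfl⟩
    exact hz.2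
  have he₃sub : e₃ ⊆ W₂ := by
    rintro x ⟨z, hz, rfl⟩
    exact (he₂sub hz).2
  have he₁P : e₁ ⊆ P := Set.inter_subset_left
  have he₂W : e₂ ⊆ W := fun x hx => ((he₂sub hx).1).1
  have he₃W : e₃ ⊆ W := fun x hx => (hW₂sub (he₃sub hx)).1
  have d12 : Disjoint e₁ e₂ := hd.mono he₁P he₂W
  have d13 : Disjoint e₁ e₃ := hd.mono he₁P he₃W
  have d23 : Disjoint e₂ e₃ := by
    refine Set.disjoint_left.mpr fun x hx hx3 => ?_
    exact ((he₂sub hx).1).2 (he₃sub hx3)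
  obtain ⟨h, hp1, hp2, hp3, hp4⟩ := exists_cycle he₁cl he₂cl he₃cl d12 d23 d13 rfl rfl
  refine ⟨h, ⟨e₁, e₂, e₃, a, b, haG, hbG, he₁cl, he₂cl, he₃cl, ⟨y, hye₁⟩,
    d12, d23, d13, rfl, rfl, hp1, hp2, hp3, hp4⟩, ?_, ?_⟩
  · rw [hp1 y hye₁]
    exact (hay : a y ∈ W₁).1
  · intro x hx
    refine hp4 x ?_
    rintro ((h1 | h2) | h3)
    exacts [hx (Or.inl (he₁P h1)), hx (Or.inr (he₂W h2)), hx (Or.inr (he₃W h3))]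

/-- The rigid stabiliser of any nonempty clopen set acts minimally on it. -/
lemma rist_min [CompactSpace X] [T2Space X] [TotallyDisconnectedSpace X]
    (hperf : ∀ x : X, (𝓝[≠] x).NeBot) (G : Subgroup (X ≃ₜ X))
    (hmin : ∀ x : X, Dense {y | ∃ g ∈ G, g x = y})
    (halt : ∀ h : X ≃ₜ X, IsAltGen G h → h ∈ G)
    {Z : Set X} (hZ : IsClopen Z) :
    ∀ y ∈ Z, ∀ V : Set X, IsOpen V → (V ∩ Z).Nonempty →
      ∃ g ∈ ristSub G Z, g y ∈ V := by
  intro y hyZ V hV hVZ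
  obtain ⟨v, hvV, hvZ⟩ := hVZ
  obtain ⟨W, hWcl, hvW, hWsub⟩ :=
    compact_exists_isClopen_in_isOpen (hV.inter hZ.2) ⟨hvV, hvZ⟩
  by_cases hyW : y ∈ W
  · exact ⟨1, (ristSub G Z).one_mem, (hWsub hyW).1⟩
  · obtain ⟨h, hAlt, hhyW, hsupp⟩ := exists_move hperf G hmin (hZ.diff hWcl) hWcl
      ⟨v, hvW⟩ Set.disjoint_sdiff_left ⟨hyZ, hyW⟩
    refine ⟨h, ⟨halt h hAlt, fun x hx => hsupp x ?_⟩, (hWsub hhyW).1⟩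
    rintro (⟨hxZ, -⟩ | hxW)
    exacts [hx hxZ, hx (hWsub hxW).2]

/-- Elements of the rigid stabiliser of `U` map `U` into itself. -/
lemma rist_maps {U : Set X} {f : X ≃ₜ X} (hf : ∀ x ∉ U, f x = x) :
    ∀ x ∈ U, f x ∈ U := by
  intro x hx
  by_contra hfx
  have h1 : f (f x) = f x := hf _ hfx
  have h2 : f x = x := f.injective h1
  rw [h2] at hfx
  exact hfx hx

/-- Two-point transitivity for rigid stabilisers. -/
lemma rist_two [CompactSpace X] [T2Space X] [TotallyDisconnectedSpace X]
    (hperf : ∀ x : X, (𝓝[≠] x).NeBot) (G : Subgroup (X ≃ₜ X))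
    (hmin : ∀ x : X, Dense {y | ∃ g ∈ G, g x = y})
    (halt : ∀ h : X ≃ₜ X, IsAltGen G h → h ∈ G)
    {Z U₁ U₂ : Set X} (hZ : IsClopen Z) (h1 : IsClopen U₁) (h2 : IsClopen U₂)
    (h1Z : U₁ ⊆ Z) (h2Z : U₂ ⊆ Z) (h1ne : U₁.Nonempty) (h2ne : U₂.Nonempty)
    (h12 : Disjoint U₁ U₂) {y w : X} (hy : y ∈ Z) (hw : w ∈ Z) (hyw : y ≠ w) :
    ∃ t ∈ ristSub G Z, t y ∈ U₁ ∧ t w ∈ U₂ := by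
  obtain ⟨q, hqU₂, hqy⟩ := exists_ne_mem_of_open hperf h2.2 h2ne y
  obtain ⟨C, hCcl, hqC, hCsub⟩ :=
    compact_exists_isClopen_in_isOpen (h2.2.inter isOpen_compl_singleton) ⟨hqU₂, hqy⟩
  have hyC : y ∉ C := fun h => (hCsub h).2 rfl
  have ht₁ : ∃ t₁ ∈ ristSub G Z, t₁ w ∈ C ∧ t₁ y = y := by
    by_cases hwC : w ∈ C
    · exact ⟨1, (ristSub G Z).one_mem, hwC, rfl⟩
    · obtain ⟨P₁, hP₁cl, hwP₁, hP₁sub⟩ := compact_exists_isClopen_in_isOpen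
        ((hZ.2.inter hCcl.compl.2).inter isOpen_compl_singleton)
        ⟨⟨hw, hwC⟩, Ne.symm hyw⟩
      obtain ⟨h, hAlt, hhw, hsupp⟩ := exists_move hperf G hmin hP₁cl hCcl ⟨q, hqC⟩
        (Set.disjoint_left.mpr fun x hx => (hP₁sub hx).1.2) hwP₁
      refine ⟨h, ⟨halt h hAlt, fun x hx => hsupp x ?_⟩, hhw, hsupp y ?_⟩
      · rintro (ha | hb)
        exacts [hx (hP₁sub ha).1.1, hx (h2Z (hCsub hb).1)]
      · rintro (ha | hb)
        exacts [(hP₁sub ha).2 rfl, hyC hb]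
  obtain ⟨t₁, ht₁Z, ht₁w, ht₁y⟩ := ht₁
  have ht₂ : ∃ t₂ ∈ ristSub G Z, t₂ y ∈ U₁ ∧ ∀ x ∈ C, t₂ x = x := by
    by_cases hyU₁ : y ∈ U₁
    · exact ⟨1, (ristSub G Z).one_mem, hyU₁, fun x _ => rfl⟩
    · obtain ⟨P₂, hP₂cl, hyP₂, hP₂sub⟩ := compact_exists_isClopen_in_isOpen
        ((hZ.2.inter h1.compl.2).inter hCcl.compl.2) ⟨⟨hy, hyU₁⟩, hyC⟩
      obtain ⟨h, hAlt, hhy, hsupp⟩ := exists_move hperf G hmin hP₂cl h1 h1ne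
        (Set.disjoint_left.mpr fun x hx => (hP₂sub hx).1.2) hyP₂
      refine ⟨h, ⟨halt h hAlt, fun x hx => hsupp x ?_⟩, hhy, fun x hxC => hsupp x ?_⟩
      · rintro (ha | hb)
        exacts [hx (hP₂sub ha).1.1, hx (h1Z hb)]
      · rintro (ha | hb)
        exacts [(hP₂sub ha).2 hxC, Set.disjoint_left.mp h12 hb (hCsub hxC).1]
  obtain ⟨t₂, ht₂Z, ht₂y, ht₂C⟩ := ht₂
  refine ⟨t₂ * t₁, mul_mem ht₂Z ht₁Z, ?_, ?_⟩
  · show t₂ (t₁ y) ∈ U₁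
    rw [ht₁y]
    exact ht₂y
  · show t₂ (t₁ w) ∈ U₂
    rw [ht₂C _ ht₁w]
    exact (hCsub ht₁w).1

end Aux

/-- **Rigid stabilisers of minimal alternatable actions.**
Let `X` be a nonempty perfect compact zero-dimensional space and let `G ≤ Homeo(X)` act
minimally and alternatably (i.e. `A(G;X) ≤ G`).  Then for every nonempty clopen `Y ⊆ X` the
rigid stabiliser `rist_G(Y)` is non-trivial and acts minimally on `Y`; moreover every
non-trivial normal subgroup of `rist_G(Y)` acts minimally on `Y`. -/
theorem rist_nontrivial_and_minimal_of_alternatable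
    [CompactSpace X] [T2Space X] [TotallyDisconnectedSpace X] [Nonempty X]
    (hperf : ∀ x : X, (𝓝[≠] x).NeBot)
    (G : Subgroup (X ≃ₜ X))
    (hmin : ∀ x : X, Dense {y | ∃ g ∈ G, g x = y})
    (halt : ∀ h : X ≃ₜ X, IsAltGen G h → h ∈ G)
    (Y : Set X) (hY : IsClopen Y) (hYne : Y.Nonempty) :
    (∃ g ∈ ristSub G Y, g ≠ 1) ∧
    (∀ y ∈ Y, ∀ V : Set X, IsOpen V → (V ∩ Y).Nonempty →
      ∃ g ∈ ristSub G Y, g y ∈ V) ∧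
    (∀ N : Subgroup (X ≃ₜ X), N ≤ ristSub G Y →
      (∀ g ∈ ristSub G Y, ∀ m ∈ N, g * m * g⁻¹ ∈ N) → N ≠ ⊥ →
      ∀ y ∈ Y, ∀ V : Set X, IsOpen V → (V ∩ Y).Nonempty → ∃ g ∈ N, g y ∈ V) := by
  refine ⟨?_, rist_min hperf G hmin halt hY, ?_⟩
  · -- non-triviality
    obtain ⟨y, hy⟩ := hYne
    obtain ⟨z, hzY, hzy⟩ := exists_ne_mem_of_open hperf hY.2 ⟨y, hy⟩ y
    obtain ⟨W, hWcl, hzW, hWsub⟩ :=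
      compact_exists_isClopen_in_isOpen (hY.2.inter isOpen_compl_singleton) ⟨hzY, hzy⟩
    have hyW : y ∉ W := fun h => (hWsub h).2 rfl
    obtain ⟨h, hAlt, hhyW, hsupp⟩ := exists_move hperf G hmin (hY.diff hWcl) hWcl
      ⟨z, hzW⟩ Set.disjoint_sdiff_left ⟨hy, hyW⟩
    refine ⟨h, ⟨halt h hAlt, fun x hx => hsupp x ?_⟩, ?_⟩
    · rintro (⟨ha, -⟩ | hb)
      exacts [hx ha, hx (hWsub hb).1]
    · intro hcon
      rw [hcon] at hhyW
      exact (hWsub hhyW).2 rfl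
  · -- minimality of non-trivial normal subgroups
    intro N hNle hnorm hNbot y hyY V hV hVY
    obtain ⟨g₀, hg₀N, hg₀ne⟩ : ∃ g₀ ∈ N, g₀ ≠ 1 := by
      by_contra hcon
      push_neg at hcon
      apply hNbot
      ext g
      simp only [Subgroup.mem_bot]
      exact ⟨fun h => hcon g h, fun h => h ▸ N.one_mem⟩
    obtain ⟨p, hp⟩ : ∃ p, g₀ p ≠ p := by
      by_contra hcon
      push_neg at hcon
      exact hg₀ne (Homeomorph.ext fun x => hcon x)
    have hpY : p ∈ Y := by
      by_contra hpY
      exact hp ((hNle hg₀N).2 p hpY)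
    obtain ⟨O₂, O₁, hO₂, hO₁, hgpO₂, hpO₁, hO₁₂⟩ := t2_separation hp
    obtain ⟨U, hUcl, hpU, hUsub⟩ := compact_exists_isClopen_in_isOpen
      ((hO₁.inter (hO₂.preimage g₀.continuous)).inter hY.2) ⟨⟨hpO₁, hgpO₂⟩, hpY⟩
    have hUY : U ⊆ Y := fun x hx => (hUsub hx).2
    have hUne : U.Nonempty := ⟨p, hpU⟩
    have hgU : ∀ x ∈ U, g₀ x ∉ U := by
      intro x hx hgx
      exact Set.disjoint_left.mp hO₁₂ (hUsub hx).1.2 (hUsub hgx).1.1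
    -- N acts minimally on U via commutators with g₀
    have hNU : ∀ q ∈ U, ∀ V' : Set X, IsOpen V' → (V' ∩ U).Nonempty →
        ∃ n ∈ N, n q ∈ V' := by
      intro q hq V' hV' hV'U
      obtain ⟨f', hf'U, hf'q⟩ := rist_min hperf G hmin halt hUcl q hq V' hV' hV'U
      have hf'Y : f' ∈ ristSub G Y := ⟨hf'U.1, fun x hx => hf'U.2 x fun h => hx (hUY h)⟩
      have hf'invU : ∀ x ∉ U, f'⁻¹ x = x := (inv_mem hf'U : f'⁻¹ ∈ ristSub G U).2
      refine ⟨g₀ * f'⁻¹ * g₀⁻¹ * f', ?_, ?_⟩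
      · have h1 : f'⁻¹ * g₀⁻¹ * f'⁻¹⁻¹ ∈ N := hnorm f'⁻¹ (inv_mem hf'Y) g₀⁻¹ (inv_mem hg₀N)
        rw [inv_inv] at h1
        have h2 := N.mul_mem hg₀N h1
        rwa [← mul_assoc, ← mul_assoc] at h2
      · have hu : f' q ∈ U := rist_maps hf'U.2 q hq
        have hgu : g₀⁻¹ (f' q) ∉ U := by
          intro hmem
          have h3 : g₀ (g₀.symm (f' q)) ∉ U := hgU _ hmem
          rw [g₀.apply_symm_apply] at h3
          exact h3 hu
        show g₀ (f'⁻¹ (g₀⁻¹ (f' q))) ∈ V'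
        rw [hf'invU _ hgu]
        show g₀ (g₀.symm (f' q)) ∈ V'
        rw [g₀.apply_symm_apply]
        exact hf'q
    -- now move `y` into `V` by an element of `N`
    obtain ⟨v, hvV, hvY⟩ := hVY
    obtain ⟨W, hWcl, hvW, hWsub⟩ :=
      compact_exists_isClopen_in_isOpen (hV.inter hY.2) ⟨hvV, hvY⟩
    by_cases hyW : y ∈ W
    · exact ⟨1, N.one_mem, (hWsub hyW).1⟩
    · -- split U into two disjoint nonempty clopen pieces
      obtain ⟨q, hqU, hqp⟩ := exists_ne_mem_of_open hperf hUcl.2 hUne p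
      obtain ⟨C, hCcl, hqC, hCsub⟩ :=
        compact_exists_isClopen_in_isOpen (hUcl.2.inter isOpen_compl_singleton) ⟨hqU, hqp⟩
      have hCU : C ⊆ U := fun x hx => (hCsub hx).1
      have hpUC : p ∈ U \ C := ⟨hpU, fun h => (hCsub h).2 rfl⟩
      have hyv : y ≠ v := fun h => hyW (h ▸ hvW)
      obtain ⟨t, htZ, htyC, htvUC⟩ := rist_two hperf G hmin halt hY hCcl (hUcl.diff hCcl)
        (fun x hx => hUY (hCU hx)) (fun x hx => hUY hx.1) ⟨q, hqC⟩ ⟨p, hpUC⟩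
        (Set.disjoint_left.mpr fun x hx h => h.2 hx) hyY (hWsub hvW).2 hyv
      have htWopen : IsOpen ((⇑t) '' W) := t.isOpen_image.mpr hWcl.2
      have htWU : ((⇑t) '' W ∩ U).Nonempty := ⟨t v, Set.mem_image_of_mem _ hvW, htvUC.1⟩
      obtain ⟨m, hmN, hmty⟩ := hNU (t y) (hCU htyC) ((⇑t) '' W) htWopen htWU
      refine ⟨t⁻¹ * m * t, ?_, ?_⟩
      · have h1 := hnorm t⁻¹ (inv_mem htZ) m hmN
        rwa [inv_inv] at h1
      · obtain ⟨w', hw'W, hw'⟩ := hmty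
        show t⁻¹ (m (t y)) ∈ V
        rw [← hw']
        show t.symm (t w') ∈ V
        rw [t.symm_apply_apply]
        exact (hWsub hw'W).1
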